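/- arXiv:1908.00968 — 4 statements merged into one kernel-verified Lean document; each statement's English description precedes it below -/
import Mathlib

section
/- Let n ≥ 2. A vector x ∈ [0,2π]ⁿ belongs to the splay set 𝒜 (all consecutive sorted geodesic gaps equal 2π/n) if and only if the shortest containing arc length satisfies γ(x) = 2π(n−1)/n. -/
open Real

/-- Geodesic distance on the unit circle between angles `a` and `b`. -/
noncomputable def gd (a b : ℝ) : ℝ := sInf {r : ℝ | ∃ k : ℤ, r = |a - b + 2 * π * k|}

/-- `x` (as a point on the circle) lies in the arc starting at angle `a` of length `L`. -/
def inArc (a L x : ℝ) : Prop := ∃ m : ℤ, a ≤ x + 2 * π * m ∧ x + 2 * π * m ≤ a + L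

/-- Length of the shortest arc of the unit circle containing all the points `e^{i θ k}`. -/
noncomputable def gamma {n : ℕ} (θ : Fin n → ℝ) : ℝ :=
  sInf {L : ℝ | 0 ≤ L ∧ ∃ a : ℝ, ∀ k, inArc a L (θ k)}

/-- Cyclic successor on `Fin n`. -/
def nxt {n : ℕ} (hn : 0 < n) (i : Fin n) : Fin n := ⟨(i.val + 1) % n, Nat.mod_lt _ hn⟩

lemma gd_symm (a b : ℝ) : gd a b = gd b a := by
  unfold gd
  congr 1
  ext r
  constructor <;> rintro ⟨k, rfl⟩ <;> refine ⟨-k, ?_⟩ <;>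
    · rw [← abs_neg]; congr 1; push_cast; ring

lemma gd_eq {a b : ℝ} (h1 : a ≤ b) (h2 : b - a ≤ 2 * π) :
    gd a b = min (b - a) (2 * π - (b - a)) := by
  have hπ := Real.pi_pos
  have hlb : ∀ r ∈ {r : ℝ | ∃ k : ℤ, r = |a - b + 2 * π * k|},
      min (b - a) (2 * π - (b - a)) ≤ r := by
    rintro r ⟨k, rfl⟩
    rcases le_or_gt (k : ℝ) 0 with hk | hk
    · have h2k : 2 * π * k ≤ 0 := by nlinarith
      calc min (b - a) (2 * π - (b - a)) ≤ b - a := min_le_left _ _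
        _ ≤ -(a - b + 2 * π * k) := by linarith
        _ ≤ |a - b + 2 * π * k| := neg_le_abs _
    · have hk1 : (1 : ℝ) ≤ (k : ℝ) := by
        have : (0 : ℤ) < k := by exact_mod_cast hk
        exact_mod_cast this
      calc min (b - a) (2 * π - (b - a)) ≤ 2 * π - (b - a) := min_le_right _ _
        _ ≤ a - b + 2 * π * k := by nlinarith
        _ ≤ |a - b + 2 * π * k| := le_abs_self _
  have hmem : min (b - a) (2 * π - (b - a)) ∈
      {r : ℝ | ∃ k : ℤ, r = |a - b + 2 * π * k|} := by
    rcases le_total (b - a) (2 * π - (b - a)) with h | h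
    · rw [min_eq_left h]
      refine ⟨0, ?_⟩
      push_cast
      rw [mul_zero, add_zero, abs_of_nonpos (by linarith)]
      ring
    · rw [min_eq_right h]
      refine ⟨1, ?_⟩
      push_cast
      rw [mul_one, abs_of_nonneg (by linarith)]
      ring
  exact le_antisymm (csInf_le ⟨_, hlb⟩ hmem) (le_csInf ⟨_, hmem⟩ hlb)

set_option maxHeartbeats 1000000 in
theorem stmt3 (n : ℕ) (hn : 2 ≤ n) (x : Fin n → ℝ)
    (hcube : ∀ i, x i ∈ Set.Icc 0 (2 * π)) :
    (∀ i : Fin n, gd ((x ∘ Tuple.sort x) i) ((x ∘ Tuple.sort x) (nxt (by omega) i)) = 2 * π / n)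
      ↔ gamma x = 2 * π * ((n : ℝ) - 1) / n := by
  have hπ : 0 < π := Real.pi_pos
  have hn0 : 0 < n := by omega
  set N := n - 1 with hN
  have hNn : N < n := by omega
  have hN1 : 1 ≤ N := by omega
  set y : Fin n → ℝ := x ∘ Tuple.sort x with hy
  have hmono : Monotone y := Tuple.monotone_sort x
  have hmem : ∀ i, y i ∈ Set.Icc 0 (2 * π) := fun i => hcube _
  have hSeq : ∀ (a L : ℝ), (∀ k, inArc a L (x k)) ↔ (∀ k, inArc a L (y k)) := by
    intro a L
    constructor
    · intro h k; exact h _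
    · intro h k
      have := h ((Tuple.sort x)⁻¹ k)
      simpa [hy, Function.comp] using this
  clear_value y
  clear hy
  set d : ℝ := 2 * π / n with hd
  have hnR : (0 : ℝ) < n := by exact_mod_cast hn0
  have hn2R : (2 : ℝ) ≤ n := by exact_mod_cast hn
  have hNR : (1 : ℝ) ≤ N := by exact_mod_cast hN1
  have hnd : (n : ℝ) * d = 2 * π := by rw [hd]; field_simp [hnR.ne']
  have hNcast : (N : ℝ) = (n : ℝ) - 1 := by
    rw [hN, Nat.cast_sub (by omega)]; simp
  have hNd : (N : ℝ) * d = 2 * π - d := by rw [hNcast]; nlinarith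
  have hd0 : 0 < d := div_pos (by positivity) hnR
  have hdπ : d ≤ π := by rw [hd, div_le_iff₀ hnR]; nlinarith
  have h0 : 2 * π * ((n : ℝ) - 1) / n = (N : ℝ) * d := by
    rw [hNcast, hd]; field_simp
  clear_value d
  clear hd
  clear_value N
  have hminlt : ∀ i : ℕ, min i N < n := fun i => by omega
  obtain ⟨f, hf⟩ : ∃ f : ℕ → ℝ, ∀ i, f i = y ⟨min i N, hminlt i⟩ := ⟨_, fun _ => rfl⟩
  have hfy : ∀ k : Fin n, f k.val = y k := by
    intro k
    have hk := k.isLt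
    rw [hf]
    congr 1
    exact Fin.ext (show min k.val N = k.val by omega)
  have hfmono : Monotone f := by
    intro i j hij
    rw [hf i, hf j]
    exact hmono (Fin.mk_le_mk.mpr (by omega))
  have hf0 : ∀ i, 0 ≤ f i := by intro i; rw [hf]; exact (hmem _).1
  have hf2 : ∀ i, f i ≤ 2 * π := by intro i; rw [hf]; exact (hmem _).2
  have hfv : ∀ i, i ≤ N → ∀ (h : i < n), f i = y ⟨i, h⟩ := by
    intro i hi h
    rw [hf]
    congr 1
    exact Fin.ext (show min i N = i by omega)
  have htel : ∑ i ∈ Finset.range N, (f (i + 1) - f i) = f N - f 0 := Finset.sum_range_sub f N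
  have hconst : ∑ _i ∈ Finset.range N, d = (N : ℝ) * d := by
    rw [Finset.sum_const, Finset.card_range, nsmul_eq_mul]
  have hgamma : gamma x = sInf {L : ℝ | 0 ≤ L ∧ ∃ a : ℝ, ∀ k, inArc a L (y k)} := by
    unfold gamma
    congr 1
    ext L
    simp only [Set.mem_setOf_eq]
    exact and_congr_right fun _ => exists_congr fun a => hSeq a L
  have hbdd : BddBelow {L : ℝ | 0 ≤ L ∧ ∃ a : ℝ, ∀ k, inArc a L (y k)} :=
    ⟨0, fun L hL => hL.1⟩
  constructor
  · -- forward direction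
    intro hgd
    have hgap : ∀ i < N, f (i + 1) - f i = d ∨ f (i + 1) - f i = 2 * π - d := by
      intro i hi
      have e1 : f i = y ⟨i, by omega⟩ := hfv i (by omega) (by omega)
      have e2 : f (i + 1) = y ⟨i + 1, by omega⟩ := hfv (i + 1) (by omega) (by omega)
      have hg := hgd ⟨i, by omega⟩
      have hnxt : nxt (by omega) (⟨i, by omega⟩ : Fin n) = ⟨i + 1, by omega⟩ := by
        apply Fin.ext
        show (i + 1) % n = i + 1
        exact Nat.mod_eq_of_lt (by omega)
      rw [hnxt] at hg
      have hle : y ⟨i, by omega⟩ ≤ y (⟨i + 1, by omega⟩ : Fin n) :=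
        hmono (Fin.mk_le_mk.mpr (Nat.le_succ i))
      have hdiff : y (⟨i + 1, by omega⟩ : Fin n) - y ⟨i, by omega⟩ ≤ 2 * π := by
        have h1 := (hmem (⟨i + 1, by omega⟩ : Fin n)).2
        have h2 := (hmem (⟨i, by omega⟩ : Fin n)).1
        linarith
      rw [gd_eq hle hdiff] at hg
      rcases min_eq_iff.mp hg with ⟨h', _⟩ | ⟨h', _⟩
      · left; rw [e1, e2]; linarith
      · right; rw [e1, e2]; linarith
    have hgapge : ∀ i < N, d ≤ f (i + 1) - f i := by
      intro i hi
      rcases hgap i hi with h' | h' <;> linarith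
    have hwrap : f N - f 0 = d ∨ f N - f 0 = 2 * π - d := by
      have e1 : f N = y ⟨N, hNn⟩ := hfv N le_rfl hNn
      have e2 : f 0 = y ⟨0, hn0⟩ := hfv 0 (by omega) hn0
      have hg := hgd ⟨N, hNn⟩
      have hnxt : nxt (by omega) (⟨N, hNn⟩ : Fin n) = ⟨0, hn0⟩ := by
        apply Fin.ext
        show (N + 1) % n = 0
        rw [show N + 1 = n by omega]
        exact Nat.mod_self n
      rw [hnxt, gd_symm] at hg
      have hle : y ⟨0, hn0⟩ ≤ y (⟨N, hNn⟩ : Fin n) := hmono (Fin.mk_le_mk.mpr (by omega))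
      have hdiff : y (⟨N, hNn⟩ : Fin n) - y ⟨0, hn0⟩ ≤ 2 * π := by
        have h1 := (hmem (⟨N, hNn⟩ : Fin n)).2
        have h2 := (hmem (⟨0, hn0⟩ : Fin n)).1
        linarith
      rw [gd_eq hle hdiff] at hg
      rcases min_eq_iff.mp hg with ⟨h', _⟩ | ⟨h', _⟩
      · left; rw [e1, e2]; linarith
      · right; rw [e1, e2]; linarith
    have hsumge : (N : ℝ) * d ≤ f N - f 0 := by
      rw [← htel, ← hconst]
      exact Finset.sum_le_sum fun i hi => hgapge i (Finset.mem_range.mp hi)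
    have hsum : f N - f 0 = (N : ℝ) * d := by
      rcases hwrap with h' | h'
      · nlinarith
      · rw [h', ← hNd]
    have heach : ∀ i < N, f (i + 1) - f i = d := by
      intro j hj
      by_contra hne
      have hlt : d < f (j + 1) - f j := lt_of_le_of_ne (hgapge j hj) (Ne.symm hne)
      have hstrict : ∑ _i ∈ Finset.range N, d < ∑ i ∈ Finset.range N, (f (i + 1) - f i) :=
        Finset.sum_lt_sum (fun i hi => hgapge i (Finset.mem_range.mp hi))
          ⟨j, Finset.mem_range.mpr hj, hlt⟩
      rw [htel, hconst] at hstrict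
      linarith
    have hmemL0 : (N : ℝ) * d ∈ {L : ℝ | 0 ≤ L ∧ ∃ a : ℝ, ∀ k, inArc a L (y k)} := by
      refine ⟨mul_nonneg (Nat.cast_nonneg N) hd0.le, f 0, fun k => ⟨0, ?_, ?_⟩⟩
      · have : f 0 ≤ y k := by rw [← hfy k]; exact hfmono (Nat.zero_le _)
        push_cast; linarith
      · have hk := k.isLt
        have : y k ≤ f N := by rw [← hfy k]; exact hfmono (by omega)
        push_cast; linarith
    have hlb : ∀ L ∈ {L : ℝ | 0 ≤ L ∧ ∃ a : ℝ, ∀ k, inArc a L (y k)}, (N : ℝ) * d ≤ L := by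
      rintro L ⟨hL0, a, hLa⟩
      by_contra hcon
      push_neg at hcon
      have hLlt : L < 2 * π - d := by rw [← hNd]; exact hcon
      choose m hm1 hm2 using hLa
      obtain ⟨g, hg⟩ : ∃ g : ℕ → ℤ, ∀ i, g i = m ⟨min i N, hminlt i⟩ := ⟨_, fun _ => rfl⟩
      have hzlb : ∀ i : ℕ, a ≤ f i + 2 * π * g i := by
        intro i; rw [hf, hg]; exact hm1 _
      have hzub : ∀ i : ℕ, f i + 2 * π * g i ≤ a + L := by
        intro i; rw [hf, hg]; exact hm2 _
      have hgstep : ∀ i < N, g (i + 1) = g i := by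
        intro i hi
        have hdz : (f (i + 1) + 2 * π * g (i + 1)) - (f i + 2 * π * g i)
            = d + 2 * π * ((g (i + 1) : ℝ) - g i) := by
          have := heach i hi
          linarith
        have ha1 := hzlb i
        have ha2 := hzub (i + 1)
        have ha3 := hzlb (i + 1)
        have ha4 := hzub i
        rcases lt_trichotomy (g (i + 1)) (g i) with h' | h' | h'
        · exfalso
          have hcle : (g (i + 1) : ℝ) - g i ≤ -1 := by
            exact_mod_cast (show g (i + 1) - g i ≤ (-1 : ℤ) by omega)
          have h2 : 2 * π * ((g (i + 1) : ℝ) - g i) ≤ 2 * π * (-1) :=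
            mul_le_mul_of_nonneg_left hcle (by positivity)
          linarith
        · exact h'
        · exfalso
          have hcge : (1 : ℝ) ≤ (g (i + 1) : ℝ) - g i := by
            exact_mod_cast (show (1 : ℤ) ≤ g (i + 1) - g i by omega)
          have h2 : 2 * π * (1 : ℝ) ≤ 2 * π * ((g (i + 1) : ℝ) - g i) :=
            mul_le_mul_of_nonneg_left hcge (by positivity)
          linarith
      have hgconst : ∀ i ≤ N, g i = g 0 := by
        intro i
        induction i with
        | zero => intro _; rfl
        | succ k ih => intro hk; rw [hgstep k (by omega)]; exact ih (by omega)
      have hzz : (f N + 2 * π * g N) - (f 0 + 2 * π * g 0) = (N : ℝ) * d := by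
        rw [hgconst N le_rfl]
        linarith [hsum]
      have hb1 := hzlb 0
      have hb2 := hzub N
      linarith
    rw [hgamma, h0]
    exact le_antisymm (csInf_le hbdd hmemL0) (le_csInf ⟨_, hmemL0⟩ hlb)
  · -- reverse direction
    intro h
    rw [hgamma, h0] at h
    have hmemfull : f N - f 0 ∈ {L : ℝ | 0 ≤ L ∧ ∃ a : ℝ, ∀ k, inArc a L (y k)} := by
      refine ⟨by linarith [hfmono (Nat.zero_le N)], f 0, fun k => ⟨0, ?_, ?_⟩⟩
      · have : f 0 ≤ y k := by rw [← hfy k]; exact hfmono (Nat.zero_le _)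
        push_cast; linarith
      · have hk := k.isLt
        have : y k ≤ f N := by rw [← hfy k]; exact hfmono (by omega)
        push_cast; linarith
    have hub1 : ∀ j < N, (2 * π - (f (j + 1) - f j)) ∈
        {L : ℝ | 0 ≤ L ∧ ∃ a : ℝ, ∀ k, inArc a L (y k)} := by
      intro j hj
      refine ⟨by linarith [hf2 (j + 1), hf0 j, hfmono (Nat.le_succ j)], f (j + 1), fun k => ?_⟩
      rcases le_or_gt k.val j with hk | hk
      · refine ⟨1, ?_, ?_⟩
        · have h1 := hf2 (j + 1)
          have h2 := (hmem k).1
          push_cast; linarith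
        · have : y k ≤ f j := by rw [← hfy k]; exact hfmono hk
          push_cast; linarith
      · refine ⟨0, ?_, ?_⟩
        · have : f (j + 1) ≤ y k := by rw [← hfy k]; exact hfmono hk
          push_cast; linarith
        · have h1 := (hmem k).2
          have h2 := hf0 j
          push_cast; linarith
    have hfull : (N : ℝ) * d ≤ f N - f 0 := by
      have := csInf_le hbdd hmemfull
      rw [h] at this
      exact this
    have hdiffle : ∀ j < N, f (j + 1) - f j ≤ d := by
      intro j hj
      have := csInf_le hbdd (hub1 j hj)
      rw [h] at this
      linarith [hNd]
    have hsumle : f N - f 0 ≤ (N : ℝ) * d := by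
      rw [← htel, ← hconst]
      exact Finset.sum_le_sum fun i hi => hdiffle i (Finset.mem_range.mp hi)
    have hsum : f N - f 0 = (N : ℝ) * d := le_antisymm hsumle hfull
    have heach : ∀ j < N, f (j + 1) - f j = d := by
      intro j hj
      by_contra hne
      have hlt : f (j + 1) - f j < d := lt_of_le_of_ne (hdiffle j hj) hne
      have hstrict : ∑ i ∈ Finset.range N, (f (i + 1) - f i) < ∑ _i ∈ Finset.range N, d :=
        Finset.sum_lt_sum (fun i hi => hdiffle i (Finset.mem_range.mp hi))
          ⟨j, Finset.mem_range.mpr hj, hlt⟩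
      rw [htel, hconst] at hstrict
      linarith
    intro i
    have hiN : i.val ≤ N := by have := i.isLt; omega
    rcases lt_or_eq_of_le hiN with hi | hi
    · have hnxt : nxt (by omega) i = ⟨i.val + 1, by omega⟩ := by
        apply Fin.ext
        show (i.val + 1) % n = i.val + 1
        exact Nat.mod_eq_of_lt (by omega)
      rw [hnxt]
      have e1 : y i = f i.val := (hfy i).symm
      have e2 : y (⟨i.val + 1, by omega⟩ : Fin n) = f (i.val + 1) := (hfy _).symm
      rw [e1, e2]
      rw [gd_eq (by linarith [heach i.val hi]) (by have := heach i.val hi; linarith)]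
      rw [heach i.val hi]
      exact min_eq_left (by linarith)
    · have hnxt : nxt (by omega) i = ⟨0, hn0⟩ := by
        apply Fin.ext
        show (i.val + 1) % n = 0
        rw [show i.val + 1 = n by omega]
        exact Nat.mod_self n
      rw [hnxt, gd_symm]
      have e1 : y i = f N := by rw [← hfy i, hi]
      have e2 : y (⟨0, hn0⟩ : Fin n) = f 0 := (hfy _).symm
      rw [e1, e2]
      rw [gd_eq (by linarith [hfmono (Nat.zero_le N)]) (by linarith [hf0 0, hf2 N])]
      rw [hsum, hNd, show 2 * π - (2 * π - d) = d by ring]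
      exact min_eq_right (by linarith)
end

section
/- Let n ≥ 2 and let Q : [0,2π] → ℝ be such that z ↦ z + Q(z) is injective, Q vanishes on [0, 2π(n−1)/n], and 2π(n−1)/n − z < Q(z) < 0 for z ∈ (2π(n−1)/n, 2π]. If x ∈ [0,2π]ⁿ has pairwise distinct coordinates modulo 2π (i.e., d(x_i,x_j) > 0 for i ≠ j) and exactly one index k satisfies x_k = 2π, then the jumped state g defined by g_k = 0 and g_i = x_i + Q(x_i) for i ≠ k also has pairwise distinct coordinates modulo 2π, and no coordinate g_i for i ≠ k equals 0 or 2π. -/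
open Real

lemma abs_add_int_ge (t : ℝ) (k : ℤ) :
    min (Int.fract t) (1 - Int.fract t) ≤ |t + k| := by
  have hf := Int.fract_nonneg t
  have hf1 := Int.fract_lt_one t
  have ht : t + k = Int.fract t + ((⌊t⌋ : ℝ) + k) := by rw [Int.fract]; ring
  rw [ht]
  have hc : ((⌊t⌋ : ℝ) + k) = ((⌊t⌋ + k : ℤ) : ℝ) := by push_cast; ring
  rw [hc]
  set m := ⌊t⌋ + k with hm
  rcases lt_trichotomy m 0 with h|h|h
  · have hmi : m ≤ -1 := by omega
    have hm' : (m : ℝ) ≤ -1 := by exact_mod_cast hmi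
    rw [abs_of_nonpos (by linarith)]
    calc min (Int.fract t) (1 - Int.fract t) ≤ 1 - Int.fract t := min_le_right _ _
    _ ≤ -(Int.fract t + (m:ℝ)) := by linarith
  · simp [h, abs_of_nonneg hf]
  · have hm' : (1:ℝ) ≤ (m:ℝ) := by exact_mod_cast h
    rw [abs_of_nonneg (by linarith)]
    calc min (Int.fract t) (1 - Int.fract t) ≤ 1 - Int.fract t := min_le_right _ _
    _ ≤ Int.fract t + (m:ℝ) := by linarith

lemma gd_pos' (a b : ℝ) (h : ∀ k : ℤ, a - b + 2 * π * k ≠ 0) : 0 < gd a b := by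
  have hπ : (0:ℝ) < 2 * π := by positivity
  set t := (a - b) / (2 * π) with htdef
  have hab : a - b = 2 * π * t := by rw [htdef]; field_simp
  have hfr : 0 < Int.fract t := by
    rcases lt_or_eq_of_le (Int.fract_nonneg t) with h'|h'
    · exact h'
    · exfalso
      apply h (-⌊t⌋)
      have h2 : Int.fract t = 0 := h'.symm
      have he : a - b + 2 * π * ((-⌊t⌋ : ℤ) : ℝ) = 2 * π * Int.fract t := by
        rw [hab, Int.fract]; push_cast; ring
      rw [he, h2, mul_zero]
  have hfr1 : Int.fract t < 1 := Int.fract_lt_one t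
  set ε := 2 * π * min (Int.fract t) (1 - Int.fract t) with hε
  have hεpos : 0 < ε := by
    apply mul_pos hπ
    exact lt_min hfr (by linarith)
  have hle : ε ≤ gd a b := by
    refine le_csInf ⟨|a - b|, ⟨0, by norm_num⟩⟩ ?_
    rintro r ⟨m, rfl⟩
    have : a - b + 2 * π * m = 2 * π * (t + m) := by rw [hab]; ring
    rw [this, abs_mul, abs_of_pos hπ, hε]
    exact mul_le_mul_of_nonneg_left (abs_add_int_ge t m) (le_of_lt hπ)
  linarith

lemma gd_ne (a b : ℝ) (h : 0 < gd a b) : ∀ k : ℤ, a - b + 2 * π * k ≠ 0 := by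
  intro m hm
  have h0 : gd a b ≤ 0 := by
    apply csInf_le
    · exact ⟨0, by rintro r ⟨j, rfl⟩; exact abs_nonneg _⟩
    · exact ⟨m, by rw [hm]; simp⟩
  linarith

theorem stmt9 (n : ℕ) (hn : 2 ≤ n) (Q : ℝ → ℝ)
    (hinj : Set.InjOn (fun z => z + Q z) (Set.Icc 0 (2 * π)))
    (h1 : ∀ z ∈ Set.Icc 0 (2 * π * ((n : ℝ) - 1) / n), Q z = 0)
    (h2 : ∀ z ∈ Set.Ioc (2 * π * ((n : ℝ) - 1) / n) (2 * π),
      2 * π * ((n : ℝ) - 1) / n - z < Q z ∧ Q z < 0)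
    (x : Fin n → ℝ) (hcube : ∀ i, x i ∈ Set.Icc 0 (2 * π))
    (hdist : ∀ i j : Fin n, i ≠ j → 0 < gd (x i) (x j))
    (k : Fin n) (hk : x k = 2 * π) (huniq : ∀ i, x i = 2 * π → i = k)
    (g : Fin n → ℝ) (hgk : g k = 0) (hg : ∀ i, i ≠ k → g i = x i + Q (x i)) :
    (∀ i j : Fin n, i ≠ j → 0 < gd (g i) (g j)) ∧
      ∀ i, i ≠ k → g i ≠ 0 ∧ g i ≠ 2 * π := by
  have hπ : (0:ℝ) < π := pi_pos
  have hnR : (2:ℝ) ≤ (n:ℝ) := by exact_mod_cast hn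
  set b0 := 2 * π * ((n : ℝ) - 1) / n with hb0
  have hb0pos : 0 < b0 := by
    apply div_pos _ (by linarith)
    apply mul_pos (by linarith) (by linarith)
  have hb0lt : b0 < 2 * π := by
    rw [hb0, div_lt_iff₀ (by linarith : (0:ℝ) < (n:ℝ))]
    nlinarith
  -- coordinates other than k are in the open interval
  have hxo : ∀ i, i ≠ k → 0 < x i ∧ x i < 2 * π := by
    intro i hi
    obtain ⟨hl, hr⟩ := hcube i
    constructor
    · rcases lt_or_eq_of_le hl with h'|h'
      · exact h'
      · exfalso
        have := gd_ne _ _ (hdist i k hi) 1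
        apply this
        rw [hk, ← h']; ring
    · rcases lt_or_eq_of_le hr with h'|h'
      · exact h'
      · exact absurd (huniq i h') hi
  -- g i in the open interval for i ≠ k
  have hgo : ∀ i, i ≠ k → 0 < g i ∧ g i < 2 * π := by
    intro i hi
    obtain ⟨hl, hr⟩ := hxo i hi
    rw [hg i hi]
    by_cases hcase : x i ≤ b0
    · rw [h1 (x i) ⟨le_of_lt hl, hcase⟩]
      constructor <;> linarith
    · push_neg at hcase
      obtain ⟨hq1, hq2⟩ := h2 (x i) ⟨hcase, le_of_lt hr⟩
      constructor <;> linarith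
  refine ⟨?_, fun i hi => ⟨ne_of_gt (hgo i hi).1, ne_of_lt (hgo i hi).2⟩⟩
  -- injectivity consequence: g i ≠ g j for i, j ≠ k, i ≠ j
  have hne : ∀ i j, i ≠ k → j ≠ k → i ≠ j → g i ≠ g j := by
    intro i j hik hjk hij heq
    rw [hg i hik, hg j hjk] at heq
    have hx : x i = x j := hinj (hcube i) (hcube j) heq
    have := gd_ne _ _ (hdist i j hij) 0
    apply this
    rw [hx]; ring
  intro i j hij
  apply gd_pos'
  intro m hm
  by_cases hik : i = k
  · have hjk : j ≠ k := by intro h; exact hij (by rw [hik, h])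
    obtain ⟨hl, hr⟩ := hgo j hjk
    rw [hik, hgk] at hm
    have hgj : g j = 2 * π * m := by linarith
    have hmpos : (0:ℝ) < (m:ℝ) := by nlinarith
    have hmz : (0:ℤ) < m := by exact_mod_cast hmpos
    have hm1 : (1:ℤ) ≤ m := hmz
    have : (1:ℝ) ≤ (m:ℝ) := by exact_mod_cast hm1
    nlinarith
  · by_cases hjk : j = k
    · obtain ⟨hl, hr⟩ := hgo i hik
      rw [hjk, hgk] at hm
      have hgi : g i = 2 * π * (-(m:ℝ)) := by linarith
      have hmpos : (0:ℝ) < -(m:ℝ) := by nlinarith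
      have hmz : (0:ℤ) < -m := by exact_mod_cast hmpos
      have hm1 : (1:ℤ) ≤ -m := hmz
      have : (1:ℝ) ≤ -(m:ℝ) := by exact_mod_cast hm1
      nlinarith
    · obtain ⟨hl1, hr1⟩ := hgo i hik
      obtain ⟨hl2, hr2⟩ := hgo j hjk
      have hm0 : m = 0 := by
        by_contra hm0
        rcases lt_or_gt_of_ne hm0 with h'|h'
        · have hmi : m ≤ -1 := by omega
          have : (m:ℝ) ≤ -1 := by exact_mod_cast hmi
          nlinarith
        · have : (1:ℝ) ≤ (m:ℝ) := by exact_mod_cast h'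
          nlinarith
      rw [hm0] at hm
      simp at hm
      exact hne i j hik hjk hij (by linarith)
end

section
/- Let n ≥ 2 and let Q : [0,2π] → ℝ vanish on [0, 2π(n−1)/n] and satisfy 2π(n−1)/n − z < Q(z) < 0 on (2π(n−1)/n, 2π]. Suppose x ∈ [0,2π]ⁿ has exactly one index k with x_k = 2π and all coordinates x_i ∈ [2π(n−1)/n, 2π] (i.e., the shortest containing arc of x lies in the arc Θ = Ψ([2π(n−1)/n, 2π])). Then the jumped state g (with g_k = 0 and g_i = x_i + Q(x_i) for i ≠ k) satisfies γ(g) ≥ γ(x). -/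
open Real

theorem stmt10 (n : ℕ) (hn : 2 ≤ n) (Q : ℝ → ℝ)
    (h1 : ∀ z ∈ Set.Icc 0 (2 * π * ((n : ℝ) - 1) / n), Q z = 0)
    (h2 : ∀ z ∈ Set.Ioc (2 * π * ((n : ℝ) - 1) / n) (2 * π),
      2 * π * ((n : ℝ) - 1) / n - z < Q z ∧ Q z < 0)
    (x : Fin n → ℝ)
    (hall : ∀ i, x i ∈ Set.Icc (2 * π * ((n : ℝ) - 1) / n) (2 * π))
    (k : Fin n) (hk : x k = 2 * π) (huniq : ∀ i, x i = 2 * π → i = k)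
    (g : Fin n → ℝ) (hgk : g k = 0) (hg : ∀ i, i ≠ k → g i = x i + Q (x i)) :
    gamma x ≤ gamma g := by
  have hπ := Real.pi_pos
  have hn2 : (2:ℝ) ≤ (n:ℝ) := by exact_mod_cast hn
  have hnpos : (0:ℝ) < (n:ℝ) := by linarith
  set c : ℝ := 2 * π * ((n : ℝ) - 1) / n with hc
  have hcπ : π ≤ c := by
    rw [hc, le_div_iff₀ hnpos]; nlinarith
  have hclt : c < 2 * π := by
    rw [hc, div_lt_iff₀ hnpos]; nlinarith
  have hc0 : (0:ℝ) ≤ c := by linarith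
  -- bounds on g i for i ≠ k
  have hgbound : ∀ i, i ≠ k → c ≤ g i ∧ g i ≤ x i ∧ g i < 2 * π := by
    intro i hi
    have hx := hall i
    have hxne : x i ≠ 2 * π := fun h => hi (huniq i h)
    rcases eq_or_lt_of_le hx.1 with h | h
    · have hQ : Q (x i) = 0 := h1 (x i) ⟨by linarith [hx.1], le_of_eq h.symm⟩
      have hgi : g i = x i := by rw [hg i hi, hQ, add_zero]
      exact ⟨by rw [hgi, ← h], le_of_eq hgi, by rw [hgi, ← h]; exact hclt⟩
    · have hxlt : x i < 2 * π := lt_of_le_of_ne hx.2 hxne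
      have hQ := h2 (x i) ⟨h, hx.2⟩
      have hgi : g i = x i + Q (x i) := hg i hi
      exact ⟨by linarith [hQ.1], by linarith [hQ.2], by linarith [hQ.2]⟩
  -- minimum of x
  have hne : (Finset.univ : Finset (Fin n)).Nonempty := ⟨k, Finset.mem_univ k⟩
  set μ : ℝ := Finset.inf' Finset.univ hne x with hμ
  have hμle : ∀ i, μ ≤ x i := fun i => Finset.inf'_le x (Finset.mem_univ i)
  obtain ⟨i0, -, hi0'⟩ := Finset.exists_mem_eq_inf' hne x
  have hi0 : μ = x i0 := hμ.trans hi0'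
  have hi0k : i0 ≠ k := by
    intro h
    have hμ2π : μ = 2 * π := by rw [hi0, h, hk]
    have : ∃ j : Fin n, j ≠ k := by
      have : Nontrivial (Fin n) := Fin.nontrivial_iff_two_le.mpr hn
      exact exists_ne k
    obtain ⟨j, hj⟩ := this
    have hj2 : x j = 2 * π := le_antisymm (hall j).2 (by rw [← hμ2π]; exact hμle j)
    exact hj (huniq j hj2)
  have hcμ : c ≤ μ := by rw [hi0]; exact (hall i0).1
  have hμ2 : μ ≤ 2 * π := by rw [hi0]; exact (hall i0).2
  have hgi0 := hgbound i0 hi0k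
  have hgi0μ : g i0 ≤ μ := by rw [hi0]; exact hgi0.2.1
  -- gamma x ≤ 2π - μ
  have hgx : gamma x ≤ 2 * π - μ := by
    apply csInf_le
    · exact ⟨0, fun L hL => hL.1⟩
    · refine ⟨by linarith, μ, fun i => ⟨0, ?_, ?_⟩⟩
      · push_cast; simpa using hμle i
      · push_cast; simp only [mul_zero, add_zero]; linarith [(hall i).2]
  -- 2π - μ ≤ gamma g
  have hgg : 2 * π - μ ≤ gamma g := by
    apply le_csInf
    · refine ⟨2 * π, by linarith, 0, fun i => ⟨0, ?_, ?_⟩⟩ <;> push_cast <;>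
        simp only [mul_zero, add_zero, zero_add] <;>
        rcases eq_or_ne i k with h | h
      · rw [h, hgk]
      · linarith [(hgbound i h).1]
      · rw [h, hgk]; linarith
      · linarith [(hgbound i h).2.2]
    · rintro L ⟨hL0, a, hcov⟩
      obtain ⟨m0, hm0a, hm0b⟩ := hcov k
      obtain ⟨m1, hm1a, hm1b⟩ := hcov i0
      rw [hgk] at hm0a hm0b
      have hgc : c ≤ g i0 := hgi0.1
      have hg2 : g i0 < 2 * π := hgi0.2.2
      -- difference bound
      have hub : g i0 + 2 * π * (m1:ℝ) - 2 * π * (m0:ℝ) ≤ L := by linarith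
      have hlb : -L ≤ g i0 + 2 * π * (m1:ℝ) - 2 * π * (m0:ℝ) := by linarith
      rcases le_or_gt 0 (m1 - m0) with hd | hd
      · have hd' : (0:ℝ) ≤ (m1:ℝ) - (m0:ℝ) := by exact_mod_cast hd
        nlinarith
      · rcases eq_or_lt_of_le (Int.lt_iff_add_one_le.mp hd) with h | h
        · have hd' : (m1:ℝ) - (m0:ℝ) = -1 := by
            have : m1 - m0 = -1 := by omega
            exact_mod_cast this
          nlinarith
        · have hd' : (m1:ℝ) - (m0:ℝ) ≤ -2 := by
            have : m1 - m0 ≤ -2 := by omega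
            exact_mod_cast this
          nlinarith
  linarith
end

section
/- The function γ : ℝⁿ → ℝ assigning to θ the length of the shortest arc on the unit circle containing all points e^{iθ_k} is continuous. -/
open Real

lemma gammaSet_mem {n : ℕ} (ψ : Fin n → ℝ) :
    (2 * π) ∈ {L : ℝ | 0 ≤ L ∧ ∃ a : ℝ, ∀ k, inArc a L (ψ k)} := by
  have hπ : (0:ℝ) < 2 * π := by positivity
  refine ⟨le_of_lt hπ, 0, fun k => ?_⟩
  refine ⟨⌈-(ψ k) / (2 * π)⌉, ?_, ?_⟩
  · have h1 := Int.le_ceil (-(ψ k) / (2 * π))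
    have h1' := (div_le_iff₀ hπ).mp h1
    linarith
  · have h2 := Int.ceil_lt_add_one (-(ψ k) / (2 * π))
    have h2' : ((⌈-(ψ k) / (2 * π)⌉ : ℤ) : ℝ) < (-(ψ k) + 2 * π) / (2 * π) := by
      rw [show (-(ψ k) + 2 * π) / (2 * π) = -(ψ k) / (2 * π) + 1 by field_simp]
      exact h2
    have h2'' := (lt_div_iff₀ hπ).mp h2'
    linarith

lemma gamma_le_gamma {n : ℕ} (θ θ' : Fin n → ℝ) :
    gamma θ ≤ gamma θ' + 2 * dist θ θ' := by
  set d := dist θ θ' with hd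
  have hd0 : 0 ≤ d := dist_nonneg
  have key : ∀ L ∈ {L : ℝ | 0 ≤ L ∧ ∃ a : ℝ, ∀ k, inArc a L (θ' k)},
      gamma θ ≤ L + 2 * d := by
    rintro L ⟨hL0, a, ha⟩
    apply csInf_le ⟨0, fun x hx => hx.1⟩
    refine ⟨by linarith, a - d, fun k => ?_⟩
    obtain ⟨m, h1, h2⟩ := ha k
    have hk : |θ k - θ' k| ≤ d := by
      have := dist_le_pi_dist θ θ' k
      rwa [Real.dist_eq] at this
    obtain ⟨hk1, hk2⟩ := abs_le.mp hk
    exact ⟨m, by constructor <;> linarith⟩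
  have h : gamma θ - 2 * d ≤ gamma θ' := by
    apply le_csInf ⟨2 * π, gammaSet_mem θ'⟩
    intro L hL
    linarith [key L hL]
  linarith

theorem stmt12 (n : ℕ) :
    Continuous (fun θ : Fin n → ℝ => gamma θ) := by
  apply LipschitzWith.continuous (K := 2)
  apply LipschitzWith.of_dist_le_mul
  intro θ θ'
  rw [Real.dist_eq, abs_sub_le_iff]
  push_cast
  constructor
  · linarith [gamma_le_gamma θ θ']
  · linarith [gamma_le_gamma θ' θ, dist_comm θ θ']
end
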